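/- For every twice continuously differentiable function σ : ℍ → ℍ, the identity D̄(D̄σ) − 2·D̄σ = −(L₁(L₁σ) + L₂(L₂σ) + L₃(L₃σ)) holds. -/

import Mathlib

open Quaternion MvPolynomial

noncomputable section

/-- The standard imaginary quaternion units. -/
def e1 : ℍ[ℝ] := ⟨0, 1, 0, 0⟩
def e2 : ℍ[ℝ] := ⟨0, 0, 1, 0⟩
def e3 : ℍ[ℝ] := ⟨0, 0, 0, 1⟩

/-- Infinitesimal right translation: `(L_v σ)(x) = Dσ(x)[x·v]`. -/
def Lop (v : ℍ[ℝ]) (σ : ℍ[ℝ] → ℍ[ℝ]) : ℍ[ℝ] → ℍ[ℝ] :=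
  fun x => fderiv ℝ σ x (x * v)

/-- The operator `D̄σ = −((L₁σ)·e₁ + (L₂σ)·e₂ + (L₃σ)·e₃)`. -/
def Dbar (σ : ℍ[ℝ] → ℍ[ℝ]) : ℍ[ℝ] → ℍ[ℝ] :=
  fun x => -(Lop e1 σ x * e1 + Lop e2 σ x * e2 + Lop e3 σ x * e3)

/-- The four real coordinates of a quaternion. -/
def coords (x : ℍ[ℝ]) : Fin 4 → ℝ := ![x.re, x.imI, x.imJ, x.imK]

/-- `σ ∈ V_k`: each of the four real components of `σ` is (given by) a harmonic
polynomial on `ℝ⁴`, homogeneous of degree `k`. -/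
def memVk (k : ℕ) (σ : ℍ[ℝ] → ℍ[ℝ]) : Prop :=
  ∀ c : Fin 4, ∃ P : MvPolynomial (Fin 4) ℝ,
    P.IsHomogeneous k ∧ (∑ i : Fin 4, pderiv i (pderiv i P)) = 0 ∧
    ∀ x : ℍ[ℝ], eval (coords x) P = coords (σ x) c

/-! `L_w L_v σ (x) = Dσ(x)[x w v] + D²σ(x)[x w, x v]`, so by symmetry of `D²σ` the operators
`L_v` obey the relations `[L_v, L_w] = L_{vw − wv}`, in particular `[L_i, L_j] = 2 L_k` for cyclic
`(i, j, k)`. Expanding `D̄D̄σ = Σ_{i,j} (L_i L_j σ) e_j e_i`, the diagonal terms give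
`−Σ_i L_i L_i σ`, and each pair of off-diagonal terms is a commutator,
`(L_i L_j σ − L_j L_i σ) e_j e_i = −2 (L_k σ) e_k`; these sum to `2 D̄σ`. -/

lemma ContDiffAt.differentiableAt_fderiv {𝕜 E F : Type*} [NontriviallyNormedField 𝕜]
    [NormedAddCommGroup E] [NormedSpace 𝕜 E] [NormedAddCommGroup F] [NormedSpace 𝕜 F]
    {f : E → F} {x : E} (hf : ContDiffAt 𝕜 2 f x) : DifferentiableAt 𝕜 (fderiv 𝕜 f) x :=
  (hf.fderiv_right le_rfl).differentiableAt one_ne_zero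

lemma e1_mul_e1 : e1 * e1 = -1 := by
  ext <;> simp [re_mul, imI_mul, imJ_mul, imK_mul] <;> simp [e1]
lemma e2_mul_e2 : e2 * e2 = -1 := by
  ext <;> simp [re_mul, imI_mul, imJ_mul, imK_mul] <;> simp [e2]
lemma e3_mul_e3 : e3 * e3 = -1 := by
  ext <;> simp [re_mul, imI_mul, imJ_mul, imK_mul] <;> simp [e3]
lemma e1_mul_e2 : e1 * e2 = e3 := by
  ext <;> simp [re_mul, imI_mul, imJ_mul, imK_mul] <;> simp [e1, e2, e3]
lemma e2_mul_e1 : e2 * e1 = -e3 := by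
  ext <;> simp [re_mul, imI_mul, imJ_mul, imK_mul] <;> simp [e1, e2, e3]
lemma e2_mul_e3 : e2 * e3 = e1 := by
  ext <;> simp [re_mul, imI_mul, imJ_mul, imK_mul] <;> simp [e1, e2, e3]
lemma e3_mul_e2 : e3 * e2 = -e1 := by
  ext <;> simp [re_mul, imI_mul, imJ_mul, imK_mul] <;> simp [e1, e2, e3]
lemma e3_mul_e1 : e3 * e1 = e2 := by
  ext <;> simp [re_mul, imI_mul, imJ_mul, imK_mul] <;> simp [e1, e2, e3]
lemma e1_mul_e3 : e1 * e3 = -e2 := by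
  ext <;> simp [re_mul, imI_mul, imJ_mul, imK_mul] <;> simp [e1, e2, e3]

lemma e1_mul_e2_sub_e2_mul_e1 : e1 * e2 - e2 * e1 = (2 : ℝ) • e3 := by
  rw [e1_mul_e2, e2_mul_e1, sub_neg_eq_add, two_smul]

lemma e2_mul_e3_sub_e3_mul_e2 : e2 * e3 - e3 * e2 = (2 : ℝ) • e1 := by
  rw [e2_mul_e3, e3_mul_e2, sub_neg_eq_add, two_smul]

lemma e3_mul_e1_sub_e1_mul_e3 : e3 * e1 - e1 * e3 = (2 : ℝ) • e2 := by
  rw [e3_mul_e1, e1_mul_e3, sub_neg_eq_add, two_smul]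

section Lop

variable {σ f g : ℍ[ℝ] → ℍ[ℝ]} {x : ℍ[ℝ]}

lemma Lop_smul_apply (c : ℝ) (v : ℍ[ℝ]) : Lop (c • v) σ x = c • Lop v σ x := by
  simp only [Lop, mul_smul_comm, map_smul]

lemma Lop_neg_apply (v : ℍ[ℝ]) : Lop v (fun y => -f y) x = -Lop v f x := by
  simp only [Lop, fderiv_fun_neg, neg_apply]

lemma Lop_add_apply (hf : DifferentiableAt ℝ f x) (hg : DifferentiableAt ℝ g x) (v : ℍ[ℝ]) :
    Lop v (fun y => f y + g y) x = Lop v f x + Lop v g x := by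
  simp only [Lop, fderiv_fun_add hf hg, add_apply]

lemma Lop_mul_const_apply (hf : DifferentiableAt ℝ f x) (v c : ℍ[ℝ]) :
    Lop v (fun y => f y * c) x = Lop v f x * c := by
  simp only [Lop, fderiv_mul_const' hf]
  rfl

lemma differentiableAt_Lop (hσ : DifferentiableAt ℝ (fderiv ℝ σ) x) (v : ℍ[ℝ]) :
    DifferentiableAt ℝ (Lop v σ) x :=
  hσ.clm_apply (differentiableAt_id.mul_const v)

lemma Lop_Lop_apply (hσ : DifferentiableAt ℝ (fderiv ℝ σ) x) (v w : ℍ[ℝ]) :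
    Lop w (Lop v σ) x = fderiv ℝ σ x (x * w * v) + fderiv ℝ (fderiv ℝ σ) x (x * w) (x * v) := by
  have hmul : HasFDerivAt (fun y : ℍ[ℝ] => y * v) ((ContinuousLinearMap.id ℝ ℍ[ℝ]).smulRight v) x :=
    (hasFDerivAt_id x).mul_const' v
  unfold Lop
  rw [(hσ.hasFDerivAt.clm_apply hmul).fderiv]
  rfl

lemma Lop_Lop_sub_Lop_Lop (hσ : ContDiffAt ℝ 2 σ x) (v w : ℍ[ℝ]) :
    Lop v (Lop w σ) x - Lop w (Lop v σ) x = Lop (v * w - w * v) σ x := by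
  have hsymm : IsSymmSndFDerivAt ℝ σ x := hσ.isSymmSndFDerivAt (by simp)
  rw [Lop_Lop_apply hσ.differentiableAt_fderiv, Lop_Lop_apply hσ.differentiableAt_fderiv, hsymm (x * v) (x * w), Lop, mul_sub, map_sub,
    mul_assoc, mul_assoc]
  abel

lemma Lop_Dbar_apply (hσ : DifferentiableAt ℝ (fderiv ℝ σ) x) (w : ℍ[ℝ]) :
    Lop w (Dbar σ) x
      = -(Lop w (Lop e1 σ) x * e1 + Lop w (Lop e2 σ) x * e2 + Lop w (Lop e3 σ) x * e3) := by
  have hL (v : ℍ[ℝ]) := differentiableAt_Lop hσ v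
  unfold Dbar
  rw [Lop_neg_apply, Lop_add_apply, Lop_add_apply, Lop_mul_const_apply (hL e1),
    Lop_mul_const_apply (hL e2), Lop_mul_const_apply (hL e3)]
  all_goals fun_prop

end Lop

theorem Dbar_sq_sub_two_Dbar (σ : ℍ[ℝ] → ℍ[ℝ]) (hσ : ContDiff ℝ 2 σ) :
    Dbar (Dbar σ) - (2 : ℝ) • Dbar σ
      = -(Lop e1 (Lop e1 σ) + Lop e2 (Lop e2 σ) + Lop e3 (Lop e3 σ)) := by
  funext x
  have hσx : ContDiffAt ℝ 2 σ x := hσ.contDiffAt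
  have hσ' : DifferentiableAt ℝ (fderiv ℝ σ) x := hσx.differentiableAt_fderiv
  have h12 : Lop e1 (Lop e2 σ) x = (2 : ℝ) • Lop e3 σ x + Lop e2 (Lop e1 σ) x := by
    rw [← sub_eq_iff_eq_add, Lop_Lop_sub_Lop_Lop hσx, e1_mul_e2_sub_e2_mul_e1, Lop_smul_apply]
  have h23 : Lop e2 (Lop e3 σ) x = (2 : ℝ) • Lop e1 σ x + Lop e3 (Lop e2 σ) x := by
    rw [← sub_eq_iff_eq_add, Lop_Lop_sub_Lop_Lop hσx, e2_mul_e3_sub_e3_mul_e2, Lop_smul_apply]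
  have h31 : Lop e3 (Lop e1 σ) x = (2 : ℝ) • Lop e2 σ x + Lop e1 (Lop e3 σ) x := by
    rw [← sub_eq_iff_eq_add, Lop_Lop_sub_Lop_Lop hσx, e3_mul_e1_sub_e1_mul_e3, Lop_smul_apply]
  simp only [Pi.sub_apply, Pi.smul_apply, Pi.neg_apply, Pi.add_apply]
  rw [Dbar, Lop_Dbar_apply hσ', Lop_Dbar_apply hσ', Lop_Dbar_apply hσ', h12, h23, h31, Dbar]
  simp only [add_mul, neg_mul, smul_mul_assoc, mul_assoc, e1_mul_e1, e1_mul_e2, e1_mul_e3,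
    e2_mul_e1, e2_mul_e2, e2_mul_e3, e3_mul_e1, e3_mul_e2, e3_mul_e3, mul_neg, mul_one]
  module
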